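/- Assume (F0)-(F6), with (F3') in place of (F3). Let u : [0,T] → X be a regulated function satisfying ∇ₓF(t, u₊(t)) = ∇ₓF(t, u₋(t)) = 0 in X for every t ∈ (0,T] (with u₊(T) := u(T)) and ∇ₓF(t, u(t)) = 0 for every t outside the jump set of u, and define f₊(t) := F(t, u₊(t)) − ∫_0^t ∂_r F(r, u(r)) dr. Then for every t ∈ [0,T) the lower right Dini derivative of f₊ at t is non-negative: liminf_{h↘0} (f₊(t+h) − f₊(t))/h ≥ 0. -/

import Mathlib

/-!
Fix `t ∈ [0, T)`, let `x = u₊(t)` and `s ↘ t`. Split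
`f₊(s) - f₊(t) = [F(s, u₊ s) - F(t, u₊ s)] + [F(t, u₊ s) - F(t, x)] - ∫ₜˢ ∂ᵣF(r, u r) dr`.
Since `u₊` is right-continuous and `∂ₜF` is jointly continuous, the mean value theorem makes the
first bracket `(s - t) ∂ₜF(t, x) + o(s - t)`. A regulated `u` is bounded and continuous off a
countable set, so `r ↦ ∂ᵣF(r, u r)` is integrable; it tends to `∂ₜF(t, x)` as `r ↘ t`, hence the
integral is at most `(s - t) ∂ₜF(t, x) + o(s - t)`. Finally `u₊ s` is critical at time `s`, so by
(F3') `‖∇ₓF(t, u₊ s)‖ ≤ L (s - t)`; this forces `x` to be critical at time `t`, and then (F5)-(F6)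
bound the middle bracket below by `-ε L (s - t)`.
-/

open Set Filter Topology MeasureTheory

section OneSidedLimits

variable {α X : Type*} [LinearOrder α] [TopologicalSpace α] [OrderTopology α] [DenselyOrdered α]

theorem tendsto_nhdsGT_of_eventually_tendsto_nhdsGT [NoMaxOrder α] [TopologicalSpace X]
    [RegularSpace X] {u v : α → X} {t : α} {y : X} (hu : Tendsto u (𝓝[>] t) (𝓝 y))
    (hv : ∀ᶠ s in 𝓝[>] t, Tendsto u (𝓝[>] s) (𝓝 (v s))) : Tendsto v (𝓝[>] t) (𝓝 y) := by
  refine (closed_nhds_basis y).tendsto_right_iff.2 fun V ⟨hVy, hVc⟩ => ?_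
  filter_upwards [eventually_eventually_nhdsWithin.2 (hu hVy), hv, self_mem_nhdsWithin]
    with s hsV hs hts
  exact hVc.mem_of_tendsto hs (hsV.filter_mono (nhdsWithin_mono _ (Ioi_subset_Ioi hts.le)))

theorem countable_setOf_ne_of_tendsto_nhdsGT [NoMaxOrder α] [SecondCountableTopology α]
    [MetricSpace X] {u v : α → X} {S : Set α} (hS : ∀ t ∈ S, S ∈ 𝓝[>] t)
    (hv : ∀ t ∈ S, Tendsto u (𝓝[>] t) (𝓝 (v t))) : {t ∈ S | u t ≠ v t}.Countable := by
  -- Points where `u` is `ε`-far from its right limit are right-isolated among such points.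
  have hsep : ∀ ε > 0, {t ∈ S | ε ≤ dist (u t) (v t)}.Countable := by
    intro ε hε
    refine Countable.mono ?_ (countable_setOfPred_isolated_right_within
      (s := {t ∈ S | ε ≤ dist (u t) (v t)}))
    rintro t ⟨htS, htε⟩
    refine ⟨⟨htS, htε⟩, ?_⟩
    have hvt : Tendsto v (𝓝[>] t) (𝓝 (v t)) := tendsto_nhdsGT_of_eventually_tendsto_nhdsGT
      (hv t htS) (mem_of_superset (hS t htS) hv)
    have hclose : ∀ᶠ s in 𝓝[>] t, dist (u s) (v s) < ε := by
      filter_upwards [(hv t htS).eventually (Metric.ball_mem_nhds _ (half_pos hε)),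
        hvt.eventually (Metric.ball_mem_nhds _ (half_pos hε))] with s hu hv
      calc dist (u s) (v s) ≤ dist (u s) (v t) + dist (v s) (v t) := dist_triangle_right _ _ _
        _ < ε / 2 + ε / 2 := add_lt_add hu hv
        _ = ε := add_halves ε
    rw [inter_comm, nhdsWithin_inter', inf_principal_eq_bot]
    filter_upwards [hclose] with s hs hsε
    exact hsε.2.not_gt hs
  refine (countable_iUnion fun n : ℕ => hsep (1 / (n + 1)) Nat.one_div_pos_of_nat).mono ?_
  rintro t ⟨htS, hne⟩
  obtain ⟨n, hn⟩ := exists_nat_one_div_lt (dist_pos.2 hne)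
  exact mem_iUnion.2 ⟨n, htS, hn.le⟩

theorem countable_setOf_ne_of_tendsto_nhdsLT [NoMinOrder α] [SecondCountableTopology α]
    [MetricSpace X] {u v : α → X} {S : Set α} (hS : ∀ t ∈ S, S ∈ 𝓝[<] t)
    (hv : ∀ t ∈ S, Tendsto u (𝓝[<] t) (𝓝 (v t))) : {t ∈ S | u t ≠ v t}.Countable :=
  countable_setOf_ne_of_tendsto_nhdsGT (α := αᵒᵈ) hS hv

end OneSidedLimits

theorem IsCompact.bddAbove_image_of_isBoundedUnder {β α : Type*} [TopologicalSpace β]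
    [SemilatticeSup α] [Nonempty α] {K : Set β} (hK : IsCompact K) {f : β → α}
    (hf : ∀ x ∈ K, IsBoundedUnder (· ≤ ·) (𝓝[K] x) f) : BddAbove (f '' K) := by
  refine hK.induction_on (p := fun A => BddAbove (f '' A)) (by simp)
    (fun A B hAB hB => hB.mono (image_mono hAB))
    (fun A B hA hB => by rw [image_union]; exact hA.union hB) fun x hx => ?_
  obtain ⟨C, hC⟩ := hf x hx
  exact ⟨{y | f y ≤ C}, hC, C, by rintro _ ⟨y, hy, rfl⟩; exact hy⟩

def IsRegulatedOn {X : Type*} [TopologicalSpace X] (u up um : ℝ → X) (a b : ℝ) : Prop :=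
  (∀ s ∈ Ico a b, Tendsto u (𝓝[>] s) (𝓝 (up s))) ∧ ∀ s ∈ Ioc a b, Tendsto u (𝓝[<] s) (𝓝 (um s))

section Regulated

variable {X : Type*} [NormedAddCommGroup X] {u up um : ℝ → X} {a b : ℝ}

theorem IsRegulatedOn.countable_setOf_not_continuousAt (hu : IsRegulatedOn u up um a b) :
    {s ∈ Ioo a b | ¬ContinuousAt u s}.Countable := by
  refine ((countable_setOf_ne_of_tendsto_nhdsGT (S := Ico a b)
    (fun s hs => Ico_mem_nhdsGT_of_mem hs) hu.1).union (countable_setOf_ne_of_tendsto_nhdsLT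
    (S := Ioc a b) (fun s hs => Ioc_mem_nhdsLT_of_mem hs) hu.2)).mono ?_
  rintro s ⟨hs, hdisc⟩
  by_contra! hcont
  obtain ⟨hright, hleft⟩ : u s = up s ∧ u s = um s := by
    simpa [hs.1, hs.2, hs.1.le, hs.2.le] using hcont
  refine hdisc ?_
  rw [ContinuousAt, ← nhdsNE_sup_pure, ← nhdsLT_sup_nhdsGT, tendsto_sup, tendsto_sup]
  exact ⟨⟨hleft ▸ hu.2 s ⟨hs.1, hs.2.le⟩, hright ▸ hu.1 s ⟨hs.1.le, hs.2⟩⟩, tendsto_pure_nhds u s⟩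

theorem IsRegulatedOn.aestronglyMeasurable_comp {E : Type*} [NormedAddCommGroup E]
    {Φ : ℝ → X → E} (hu : IsRegulatedOn u up um a b)
    (hΦ : ContinuousOn (fun p : ℝ × X => Φ p.1 p.2) (Icc a b ×ˢ univ)) :
    AEStronglyMeasurable (fun r => Φ r (u r)) (volume.restrict (Icc a b)) := by
  set D := {s ∈ Ioo a b | ¬ContinuousAt u s}
  have hD : D.Countable := hu.countable_setOf_not_continuousAt
  have hcont : ContinuousOn (fun r => Φ r (u r)) (Ioo a b \ D) := fun s hs =>
    (hΦ (s, u s) ⟨Ioo_subset_Icc_self hs.1, trivial⟩).comp (f := fun r => (r, u r))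
      (continuousAt_id.prodMk (not_not.1 fun h => hs.2 ⟨hs.1, h⟩)).continuousWithinAt
      fun r (hr : r ∈ Ioo a b \ D) => ⟨Ioo_subset_Icc_self hr.1, trivial⟩
  rw [← Measure.restrict_congr_set ((sdiff_null_ae_eq_self (hD.measure_zero volume)).trans
    Ioo_ae_eq_Icc)]
  exact hcont.aestronglyMeasurable (measurableSet_Ioo.diff hD.measurableSet)

theorem IsRegulatedOn.isBoundedUnder_norm_nhdsWithin_Icc (hu : IsRegulatedOn u up um a b)
    {s : ℝ} (hs : s ∈ Icc a b) : IsBoundedUnder (· ≤ ·) (𝓝[Icc a b] s) (fun r => ‖u r‖) := by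
  obtain ⟨C₁, hC₁⟩ : ∃ C, ∀ᶠ r in 𝓝[>] s, r ∈ Icc a b → ‖u r‖ ≤ C := by
    rcases hs.2.lt_or_eq with hsb | rfl
    · exact ⟨_, ((hu.1 s ⟨hs.1, hsb⟩).norm.eventually (ge_mem_nhds (lt_add_one _))).mono
        fun r hr _ => hr⟩
    · exact ⟨0, eventually_nhdsWithin_of_forall fun r hr hrI => absurd hrI.2 (not_le.2 hr)⟩
  obtain ⟨C₂, hC₂⟩ : ∃ C, ∀ᶠ r in 𝓝[<] s, r ∈ Icc a b → ‖u r‖ ≤ C := by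
    rcases hs.1.lt_or_eq with has | rfl
    · exact ⟨_, ((hu.2 s ⟨has, hs.2⟩).norm.eventually (ge_mem_nhds (lt_add_one _))).mono
        fun r hr _ => hr⟩
    · exact ⟨0, eventually_nhdsWithin_of_forall fun r hr hrI => absurd hrI.1 (not_le.2 hr)⟩
  refine isBoundedUnder_of_eventually_le (a := max (max C₁ C₂) ‖u s‖) ?_
  rw [nhdsWithin, ← nhdsNE_sup_pure, ← nhdsLT_sup_nhdsGT, eventually_inf_principal]
  simp only [eventually_sup, eventually_pure]
  refine ⟨⟨?_, ?_⟩, fun _ => le_max_right _ _⟩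
  · exact hC₂.mono fun r hr hrI => (hr hrI).trans (le_max_of_le_left (le_max_right _ _))
  · exact hC₁.mono fun r hr hrI => (hr hrI).trans (le_max_of_le_left (le_max_left _ _))

theorem IsRegulatedOn.tendsto_comp_nhdsGT {E : Type*} [TopologicalSpace E] {Φ : ℝ → X → E}
    (hu : IsRegulatedOn u up um a b)
    (hΦ : ContinuousOn (fun p : ℝ × X => Φ p.1 p.2) (Icc a b ×ˢ univ)) {t : ℝ}
    (ht : t ∈ Ico a b) : Tendsto (fun r => Φ r (u r)) (𝓝[>] t) (𝓝 (Φ t (up t))) :=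
  (hΦ _ ⟨Ico_subset_Icc_self ht, trivial⟩).tendsto.comp (tendsto_nhdsWithin_iff.2
    ⟨(tendsto_nhdsWithin_of_tendsto_nhds tendsto_id).prodMk_nhds (hu.1 t ht),
      mem_of_superset (Icc_mem_nhdsGT_of_mem ht) fun _ hs => ⟨hs, trivial⟩⟩)

theorem IsRegulatedOn.integrableOn_comp [ProperSpace X] {E : Type*} [NormedAddCommGroup E]
    {Φ : ℝ → X → E} (hu : IsRegulatedOn u up um a b)
    (hΦ : ContinuousOn (fun p : ℝ × X => Φ p.1 p.2) (Icc a b ×ˢ univ)) :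
    IntegrableOn (fun r => Φ r (u r)) (Icc a b) := by
  obtain ⟨C, hC⟩ := isCompact_Icc.bddAbove_image_of_isBoundedUnder
    fun s hs => hu.isBoundedUnder_norm_nhdsWithin_Icc hs
  obtain ⟨M, hM⟩ := (isCompact_Icc.prod (isCompact_closedBall (0 : X) C))
    |>.exists_bound_of_continuousOn (hΦ.mono (prod_mono_right (subset_univ _)))
  refine Integrable.of_bound (hu.aestronglyMeasurable_comp hΦ) M
    (ae_restrict_of_forall_mem measurableSet_Icc fun r hr => hM (r, u r) ⟨hr, ?_⟩)
  exact mem_closedBall_zero_iff.2 (hC (mem_image_of_mem _ hr))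

end Regulated

theorem ContDiffOn.continuousOn_of_hasDerivWithinAt_fst {X : Type*} [NormedAddCommGroup X]
    [NormedSpace ℝ X] {F F' : ℝ → X → ℝ} {a b : ℝ}
    (hF : ContDiffOn ℝ 1 (fun p : ℝ × X => F p.1 p.2) (Icc a b ×ˢ univ)) (hab : a < b)
    (hF' : ∀ x : X, ∀ t ∈ Icc a b, HasDerivWithinAt (fun τ => F τ x) (F' t x) (Icc a b) t) :
    ContinuousOn (fun p : ℝ × X => F' p.1 p.2) (Icc a b ×ˢ univ) := by
  have hP : UniqueDiffOn ℝ (Icc a b ×ˢ (univ : Set X)) :=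
    (uniqueDiffOn_Icc hab).prod uniqueDiffOn_univ
  refine ((hF.continuousOn_fderivWithin hP le_rfl).clm_apply
    (continuousOn_const (c := ((1 : ℝ), (0 : X))))).congr fun ⟨t, x⟩ hp => ?_
  have hcurve : HasDerivWithinAt (fun τ : ℝ => (τ, x)) ((1 : ℝ), (0 : X)) (Icc a b) t :=
    (hasDerivWithinAt_id _ _).prodMk (hasDerivWithinAt_const _ _ _)
  have hline : HasDerivWithinAt (fun τ => F τ x)
      (fderivWithin ℝ (fun p : ℝ × X => F p.1 p.2) (Icc a b ×ˢ univ) (t, x) (1, 0)) (Icc a b) t :=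
    ((hF.differentiableOn one_ne_zero _ hp).hasFDerivWithinAt.comp_hasDerivWithinAt t hcurve
      fun τ hτ => mk_mem_prod hτ (mem_univ _) :)
  exact (uniqueDiffOn_Icc hab t hp.1).eq_deriv _ (hF' x t hp.1) hline

theorem eventually_abs_sub_sub_mul_le_of_hasDerivWithinAt {X : Type*} [TopologicalSpace X]
    {Φ Φ' : ℝ → X → ℝ} {a b t ε : ℝ} {x : X} (ht : t ∈ Ico a b)
    (hΦ : ∀ w : X, ∀ r ∈ Icc a b, HasDerivWithinAt (fun τ => Φ τ w) (Φ' r w) (Icc a b) r)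
    (hc : ContinuousWithinAt (fun p : ℝ × X => Φ' p.1 p.2) (Icc a b ×ˢ univ) (t, x))
    (hε : 0 < ε) :
    ∀ᶠ p in 𝓝[>] t ×ˢ 𝓝 x, |Φ p.1 p.2 - Φ t p.2 - (p.1 - t) * Φ' t x| ≤ ε * (p.1 - t) := by
  have hnear : ∀ᶠ p in 𝓝[≥] t ×ˢ 𝓝 x, p.1 ∈ Icc a b ∧ |Φ' p.1 p.2 - Φ' t x| ≤ ε := by
    have h := (eventually_mem_nhdsWithin.mono fun p (hp : p ∈ Icc a b ×ˢ univ) => hp.1).and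
      (hc (Metric.closedBall_mem_nhds _ hε))
    rw [nhdsWithin_prod_eq, nhdsWithin_univ] at h
    exact h.filter_mono (prod_mono (nhdsWithin_le_of_mem (Icc_mem_nhdsGE_of_mem ht)) le_rfl)
  obtain ⟨P, hP, Q, hQ, hPQ⟩ := eventually_prod_iff.1 hnear
  obtain ⟨c, htc, hIco⟩ := mem_nhdsGE_iff_exists_Ico_subset.1 hP
  refine eventually_prod_iff.2 ⟨(· ∈ Ioo t c), Ioo_mem_nhdsGT htc, Q, hQ, fun {s} hs {w} hw => ?_⟩
  have hnear' : ∀ r ∈ Icc t s, r ∈ Icc a b ∧ |Φ' r w - Φ' t x| ≤ ε := fun r hr =>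
    hPQ (hIco (Icc_subset_Ico_right hs.2 hr)) hw
  have hsub : Icc t s ⊆ Icc a b := Icc_subset_Icc ht.1 (hnear' s (right_mem_Icc.2 hs.1.le)).1.2
  have hmvt := (convex_Icc t s).norm_image_sub_le_of_norm_hasDerivWithin_le
    (f := fun r => Φ r w - (r - t) * Φ' t x) (f' := fun r => Φ' r w - 1 * Φ' t x)
    (fun r hr => ((hΦ w r (hsub hr)).mono hsub).sub
      (((hasDerivWithinAt_id r _).sub_const t).mul_const _))
    (fun r hr => by simpa using (hnear' r hr).2) (left_mem_Icc.2 hs.1.le) (right_mem_Icc.2 hs.1.le)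
  simp only [Real.norm_eq_abs, sub_self, zero_mul, sub_zero, abs_of_pos (sub_pos.2 hs.1)]
    at hmvt
  convert hmvt using 2
  ring

theorem eventually_integral_sub_le_of_tendsto {g : ℝ → ℝ} {a b t c ε : ℝ}
    (hg : IntegrableOn g (Icc a b)) (ht : t ∈ Ico a b) (hc : Tendsto g (𝓝[>] t) (𝓝 c))
    (hε : 0 < ε) :
    ∀ᶠ s in 𝓝[>] t, (∫ r in a..s, g r) - ∫ r in a..t, g r ≤ (c + ε) * (s - t) := by
  have hderiv : HasDerivWithinAt (fun s => ∫ r in a..s, g r) c (Ici t) t :=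
    intervalIntegral.integral_hasDerivWithinAt_of_tendsto_ae_right
      ((intervalIntegrable_iff_integrableOn_Icc_of_le ht.1).2
        (hg.mono_set (Icc_subset_Icc_right ht.2.le)))
      (AEStronglyMeasurable.stronglyMeasurableAtFilter_of_mem hg.aestronglyMeasurable
        (Icc_mem_nhdsGT_of_mem ht))
      (hc.mono_left inf_le_left)
  filter_upwards [hderiv.Ioi_of_Ici.limsup_slope_le' (lt_irrefl t) (lt_add_of_pos_right c hε),
    self_mem_nhdsWithin] with s hs hts
  rw [slope_def_field, div_lt_iff₀ (sub_pos.2 hts)] at hs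
  exact hs.le

/-- `hiso` keeps the quotient away from the junk value `(φ v - φ x) / 0 = 0`. -/
theorem eventually_neg_mul_norm_le_sub_of_liminf {X Y : Type*} [TopologicalSpace X]
    [NormedAddCommGroup Y] {φ : X → ℝ} {g : X → Y} {x : X} {ε : ℝ}
    (hiso : ∀ᶠ v in 𝓝[≠] x, g v ≠ 0)
    (hlim : 0 ≤ liminf (fun v => (((φ v - φ x) / ‖g v‖ : ℝ) : EReal)) (𝓝[≠] x)) (hε : 0 < ε) :
    ∀ᶠ v in 𝓝 x, -(ε * ‖g v‖) ≤ φ v - φ x := by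
  have hquot : ∀ᶠ v in 𝓝[≠] x, ((-ε : ℝ) : EReal) < (((φ v - φ x) / ‖g v‖ : ℝ) : EReal) :=
    eventually_lt_of_lt_liminf ((EReal.coe_lt_coe_iff.2 (neg_neg_of_pos hε)).trans_le hlim)
  filter_upwards [eventually_nhdsWithin_iff.1 (hiso.and hquot)] with v hv
  rcases eq_or_ne v x with rfl | hvx
  · simpa using mul_nonneg hε.le (norm_nonneg (g v))
  · obtain ⟨hgv, hq⟩ := hv hvx
    rw [EReal.coe_lt_coe_iff, lt_div_iff₀ (norm_pos_iff.2 hgv)] at hq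
    linarith

theorem eventually_nhdsNE_ne_zero_of_isolated {X Y : Type*} [PseudoMetricSpace X] [Zero Y]
    {g : X → Y} {x : X} (h : ∃ r > 0, ∀ y, g y = 0 → y ∈ Metric.ball x r → y = x) :
    ∀ᶠ v in 𝓝[≠] x, g v ≠ 0 := by
  obtain ⟨r, hr, hisol⟩ := h
  filter_upwards [inter_mem_nhdsWithin _ (Metric.ball_mem_nhds _ hr)] with v hv hzero
  exact hv.1 (hisol v hzero hv.2)

theorem eventually_neg_mul_le_sub_of_liminf {X Y : Type*} [TopologicalSpace X]
    [NormedAddCommGroup Y] {φ : X → ℝ} {g : X → Y} {x : X} {v : ℝ → X} {t L ε : ℝ}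
    (hiso : ∀ᶠ v in 𝓝[≠] x, g v ≠ 0)
    (hlim : 0 ≤ liminf (fun v => (((φ v - φ x) / ‖g v‖ : ℝ) : EReal)) (𝓝[≠] x))
    (hv : Tendsto v (𝓝[>] t) (𝓝 x)) (hL : 0 ≤ L)
    (hg : ∀ᶠ s in 𝓝[>] t, ‖g (v s)‖ ≤ L * (s - t)) (hε : 0 < ε) :
    ∀ᶠ s in 𝓝[>] t, -(ε * (s - t)) ≤ φ (v s) - φ x := by
  have hL1 : 0 < L + 1 := by linarith
  filter_upwards [hv.eventually (eventually_neg_mul_norm_le_sub_of_liminf hiso hlim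
    (div_pos hε hL1)), hg, self_mem_nhdsWithin] with s hφ hgs hts
  have hts' : 0 ≤ s - t := sub_nonneg.2 (mem_Ioi.1 hts).le
  calc -(ε * (s - t)) ≤ -(ε / (L + 1) * (L * (s - t))) := by
        rw [neg_le_neg_iff, ← mul_assoc, div_mul_eq_mul_div]
        gcongr
        rw [div_le_iff₀ hL1]
        linarith
    _ ≤ -(ε / (L + 1) * ‖g (v s)‖) := by gcongr
    _ ≤ φ (v s) - φ x := hφ

theorem eventually_norm_le_of_lipschitzOn_time {X Y : Type*} [PseudoMetricSpace X]
    [SeminormedAddCommGroup Y] {G : ℝ → X → Y} {v : ℝ → X} {a b t r L : ℝ} {x : X}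
    (ht : t ∈ Ico a b) (hv : Tendsto v (𝓝[>] t) (𝓝 x)) (hr : 0 < r)
    (hLip : ∀ y ∈ Metric.ball x r, ∀ s ∈ Icc a b, ∀ s' ∈ Icc a b,
      ‖G s y - G s' y‖ ≤ L * |s - s'|)
    (hzero : ∀ s ∈ Ioc a b, G s (v s) = 0) :
    ∀ᶠ s in 𝓝[>] t, ‖G t (v s)‖ ≤ L * (s - t) := by
  filter_upwards [hv.eventually (Metric.ball_mem_nhds x hr), Ioo_mem_nhdsGT ht.2] with s hs hst
  have hsI : s ∈ Ioc a b := ⟨ht.1.trans_lt hst.1, hst.2.le⟩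
  calc ‖G t (v s)‖ = ‖G s (v s) - G t (v s)‖ := by rw [hzero s hsI, zero_sub, norm_neg]
    _ ≤ L * |s - t| := hLip _ hs s (Ioc_subset_Icc_self hsI) t (Ico_subset_Icc_self ht)
    _ = L * (s - t) := by rw [abs_of_pos (sub_pos.2 hst.1)]

theorem eq_zero_of_tendsto_nhdsGT_of_norm_le {X Y : Type*} [TopologicalSpace X]
    [NormedAddCommGroup Y] {G : X → Y} {v : ℝ → X} {t L : ℝ} {x : X}
    (hG : ContinuousAt G x) (hv : Tendsto v (𝓝[>] t) (𝓝 x))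
    (hle : ∀ᶠ s in 𝓝[>] t, ‖G (v s)‖ ≤ L * (s - t)) : G x = 0 := by
  have hlin : Tendsto (fun s => L * (s - t)) (𝓝[>] t) (𝓝 0) :=
    ((continuous_const.mul (continuous_id.sub continuous_const)).tendsto' t 0 (by simp)).mono_left
      nhdsWithin_le_nhds
  exact tendsto_nhds_unique (hG.tendsto.comp hv) (squeeze_zero_norm' hle hlin)

theorem zero_le_liminf_slope_of_forall_eventually {f : ℝ → ℝ} {t : ℝ}
    (hf : ∀ ε > 0, ∀ᶠ s in 𝓝[>] t, -(ε * (s - t)) ≤ f s - f t) :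
    (0 : EReal) ≤ liminf (fun h : ℝ => (((f (t + h) - f t) / h : ℝ) : EReal)) (𝓝[>] 0) := by
  refine le_of_forall_lt_imp_le_of_dense fun y hy => ?_
  obtain ⟨δ, hyδ, hδ⟩ := EReal.lt_iff_exists_real_btwn.1 hy
  have hshift : Tendsto (t + ·) (𝓝[>] 0) (𝓝[>] t) := by
    have := (map_add_left_nhdsGT (c := t) (a := (0 : ℝ))).le
    rwa [add_zero] at this
  refine le_liminf_of_le (by isBoundedDefault) ?_
  filter_upwards [hshift.eventually (hf (-δ) (neg_pos.2 (EReal.coe_lt_coe_iff.1 hδ))),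
    self_mem_nhdsWithin] with h hh (hpos : 0 < h)
  refine hyδ.le.trans (EReal.coe_le_coe_iff.2 ?_)
  rw [le_div_iff₀ hpos]
  simp only [add_sub_cancel_left] at hh
  linarith

theorem dini_lower_right_derivative_nonneg
    {X : Type*} [NormedAddCommGroup X] [InnerProductSpace ℝ X] [FiniteDimensional ℝ X]
    (T : ℝ)
    (F dtF : ℝ → X → ℝ) (gradF : ℝ → X → X)
    -- (F0)
    (hF0 : ContDiffOn ℝ 1 (fun p : ℝ × X => F p.1 p.2) (Set.Icc 0 T ×ˢ Set.univ))
    (hdtF : ∀ x : X, ∀ t ∈ Set.Icc 0 T,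
      HasDerivWithinAt (fun τ => F τ x) (dtF t x) (Set.Icc 0 T) t)
    -- (F3'): t ↦ ∇ₓF(t,u) is Lipschitz on [0,T], locally uniformly in u
    (hF3' : ∀ x₀ : X, ∃ r > (0 : ℝ), ∃ L : ℝ, 0 ≤ L ∧ ∀ x ∈ Metric.ball x₀ r,
      ∀ s ∈ Set.Icc 0 T, ∀ t ∈ Set.Icc 0 T, ‖gradF s x - gradF t x‖ ≤ L * |s - t|)
    -- (F4)
    (hessF : ℝ → X → X →L[ℝ] X)
    (hhessF : ∀ t ∈ Set.Icc 0 T, ∀ x : X, HasFDerivAt (gradF t) (hessF t x) x)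
    -- (F5)
    (hF5 : ∀ t ∈ Set.Icc 0 T, ∀ x : X, gradF t x = 0 →
      ∃ r > (0 : ℝ), ∀ y : X, gradF t y = 0 → y ∈ Metric.ball x r → y = x)
    -- (F6)
    (hF6 : ∀ t ∈ Set.Icc 0 T, ∀ x : X, gradF t x = 0 →
      0 ≤ Filter.liminf (fun v : X => (((F t v - F t x) / ‖gradF t v‖ : ℝ) : EReal)) (𝓝[≠] x))
    -- u is regulated, with right limits up and left limits um
    (u up um : ℝ → X)
    (hup : ∀ s ∈ Set.Ico 0 T, Filter.Tendsto u (𝓝[>] s) (𝓝 (up s)))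
    (hum : ∀ s ∈ Set.Ioc 0 T, Filter.Tendsto u (𝓝[<] s) (𝓝 (um s)))
    -- stability of the one-sided limits
    (hstab : ∀ t ∈ Set.Ioc 0 T, gradF t (up t) = 0 ∧ gradF t (um t) = 0)
    -- the function f₊
    (fp : ℝ → ℝ)
    (hfp : ∀ t : ℝ, fp t = F t (up t) - ∫ r in (0 : ℝ)..t, dtF r (u r)) :
    ∀ t ∈ Set.Ico 0 T,
      (0 : EReal) ≤ Filter.liminf
        (fun h : ℝ => (((fp (t + h) - fp t) / h : ℝ) : EReal)) (𝓝[>] 0) := by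
  intro t ht
  have hu : IsRegulatedOn u up um 0 T := ⟨hup, hum⟩
  have htI : t ∈ Icc 0 T := Ico_subset_Icc_self ht
  have hdtFc := hF0.continuousOn_of_hasDerivWithinAt_fst (ht.1.trans_lt ht.2) hdtF
  have hup_right : Tendsto up (𝓝[>] t) (𝓝 (up t)) := tendsto_nhdsGT_of_eventually_tendsto_nhdsGT
    (hup t ht) (mem_of_superset (Ico_mem_nhdsGT_of_mem ht) hup)
  obtain ⟨r, hr, L, hL, hLip⟩ := hF3' (up t)
  have hgrad := eventually_norm_le_of_lipschitzOn_time ht hup_right hr hLip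
    fun s hs => (hstab s hs).1
  have hcrit : gradF t (up t) = 0 :=
    eq_zero_of_tendsto_nhdsGT_of_norm_le (hhessF t htI _).continuousAt hup_right hgrad
  refine zero_le_liminf_slope_of_forall_eventually fun ε hε => ?_
  have hε3 : 0 < ε / 3 := by positivity
  have hgraph : Tendsto (fun s => (s, up s)) (𝓝[>] t) (𝓝[>] t ×ˢ 𝓝 (up t)) :=
    tendsto_id.prodMk hup_right
  filter_upwards [hgraph.eventually
      (eventually_abs_sub_sub_mul_le_of_hasDerivWithinAt ht hdtF (hdtFc _ ⟨htI, trivial⟩) hε3),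
    eventually_integral_sub_le_of_tendsto (hu.integrableOn_comp hdtFc) ht
      (hu.tendsto_comp_nhdsGT hdtFc ht) hε3,
    eventually_neg_mul_le_sub_of_liminf (eventually_nhdsNE_ne_zero_of_isolated
      (hF5 t htI _ hcrit)) (hF6 t htI _ hcrit) hup_right hL hgrad hε3]
    with s hF_time hintegral hF_space
  rw [hfp, hfp]
  linarith [(abs_le.1 hF_time).1]
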